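/- arXiv:2010.04896 — 9 statements merged into one kernel-verified Lean document; each statement's English description precedes it below -/
import Mathlib

section
/- Identifiability of GBM components (Theorem 1). Suppose M < min{I, J}, and suppose (A₁,B₁,C₁,D₁,U₁,V₁) and (A₂,B₂,C₂,D₂,U₂,V₂) are two GBM parameter tuples, each satisfying Condition 1 with the same covariate matrices X and Z. If X A₁ᵀ + B₁ Zᵀ + X C₁ Zᵀ + U₁ D₁ V₁ᵀ = X A₂ᵀ + B₂ Zᵀ + X C₂ Zᵀ + U₂ D₂ V₂ᵀ, then A₁ = A₂, B₁ = B₂, C₁ = C₂, D₁ = D₂, U₁ = U₂, and V₁ = V₂. -/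
open Matrix

/-- Condition 1 (identifiability constraints) for a GBM parameter tuple. -/
def Cond1 {I J K L M : ℕ} (X : Matrix (Fin I) (Fin K) ℝ) (Z : Matrix (Fin J) (Fin L) ℝ)
    (A : Matrix (Fin J) (Fin K) ℝ) (B : Matrix (Fin I) (Fin L) ℝ)
    (D : Matrix (Fin M) (Fin M) ℝ)
    (U : Matrix (Fin I) (Fin M) ℝ) (V : Matrix (Fin J) (Fin M) ℝ) : Prop :=
  IsUnit (Xᵀ * X) ∧ IsUnit (Zᵀ * Z) ∧
  Xᵀ * B = 0 ∧ Zᵀ * A = 0 ∧ Xᵀ * U = 0 ∧ Zᵀ * V = 0 ∧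
  Uᵀ * U = 1 ∧ Vᵀ * V = 1 ∧
  D.IsDiag ∧ StrictAnti (fun m : Fin M => D m m) ∧ (∀ m, 0 < D m m) ∧
  (∀ (m : Fin M) (i : Fin I),
    (U i m ≠ 0 ∧ ∀ i' : Fin I, i' < i → U i' m = 0) → 0 < U i m)

/-!
Multiplying the model equation on the left by `Xᵀ` and on the right by `Z` annihilates every
component orthogonal to the covariates, and since `XᵀX` and `ZᵀZ` are invertible this recovers
`C`, then `A` and `B`, and hence the low-rank part `T = U₁ D₁ V₁ᵀ = U₂ D₂ V₂ᵀ`.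

For the low-rank part put `P = U₁ᵀU₂` and `N = V₁ᵀV₂`. Then `D₁ N = P D₂` and `D₁ P = N D₂`,
so `D₁² P = P D₂²`, and `U₂ = U₁ P`, so `P` is orthogonal. A nonzero entry `P i j` forces
`d₁ i = d₂ j`; every column of `P` has one, so the values of `d₂` occur among those of `d₁`, and
two strictly decreasing sequences of the same length with this property coincide. With distinct
singular values `P` is then diagonal with entries `±1`, and the sign convention on the leading
entries of the columns of `U` forces `P = 1`; finally `D N = D` gives `N = 1`.
-/

theorem StrictAnti.eq_of_range_subset {β γ : Type*} [Finite β] [LinearOrder β] [Preorder γ]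
    {f g : β → γ} (hf : StrictAnti f) (hg : StrictAnti g) (h : Set.range g ⊆ Set.range f) :
    f = g := by
  refine (hf.range_inj hg).mp (Set.eq_of_subset_of_ncard_le h ?_ (Set.toFinite _)).symm
  rw [Set.ncard_range_of_injective hf.injective, Set.ncard_range_of_injective hg.injective]

theorem Pi.isUnit_of_forall_pos {𝕜 μ : Type*} [GroupWithZero 𝕜] [Preorder 𝕜] {d : μ → 𝕜}
    (hd : ∀ m, 0 < d m) : IsUnit d :=
  Pi.isUnit_iff.mpr fun m => (hd m).ne'.isUnit

theorem pos_of_leading_entry_pos {𝕜 ι : Type*} [Ring 𝕜] [LinearOrder 𝕜] [IsStrictOrderedRing 𝕜]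
    [LinearOrder ι] [WellFoundedLT ι] {u : ι → 𝕜}
    (hu : ∃ i, u i ≠ 0) {c : 𝕜} (hc : c ≠ 0)
    (hu_pos : ∀ i, (u i ≠ 0 ∧ ∀ i' < i, u i' = 0) → 0 < u i)
    (hcu_pos : ∀ i, (u i * c ≠ 0 ∧ ∀ i' < i, u i' * c = 0) → 0 < u i * c) : 0 < c := by
  obtain ⟨i₀, hi₀, hmin⟩ := wellFounded_lt.has_min {i | u i ≠ 0} hu
  have hlead : ∀ i' < i₀, u i' = 0 := fun i' hi' => by_contra fun h => hmin i' h hi'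
  refine (mul_pos_iff_of_pos_left (hu_pos i₀ ⟨hi₀, hlead⟩)).mp ?_
  exact hcu_pos i₀ ⟨mul_ne_zero hi₀ hc, fun i' hi' => by rw [hlead i' hi', zero_mul]⟩

namespace Matrix

variable {ι κ μ ν R : Type*} [CommRing R]

theorem transpose_mul_eq_zero_comm [Fintype ι] {A : Matrix ι μ R} {B : Matrix ι κ R} :
    Aᵀ * B = 0 ↔ Bᵀ * A = 0 := by
  rw [← transpose_eq_zero, transpose_mul, transpose_transpose]

theorem exists_ne_zero_of_transpose_mul_self_eq_one [Fintype ι] [DecidableEq μ] [Nontrivial R]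
    {Q : Matrix ι μ R} (hQ : Qᵀ * Q = 1) (j : μ) : ∃ i, Q i j ≠ 0 := by
  by_contra! h
  simpa [mul_apply, h] using congrFun (congrFun hQ j) j

section Cancel

variable [Fintype μ] [DecidableEq μ] {G : Matrix μ μ R}

theorem mul_left_cancel_of_isUnit (hG : IsUnit G) {x y : Matrix μ ν R} (h : G * x = G * y) :
    x = y :=
  letI := hG.invertible
  mul_right_injective_of_invertible G h

theorem mul_right_cancel_of_isUnit (hG : IsUnit G) {x y : Matrix ν μ R} (h : x * G = y * G) :
    x = y :=
  letI := hG.invertible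
  mul_left_injective_of_invertible G h

end Cancel

section LowRank

variable [Fintype μ] [DecidableEq μ] {U₁ U₂ : Matrix ι μ R} {V₁ V₂ : Matrix κ μ R}
  {d₁ d₂ : μ → R}

theorem transpose_of_mul_diagonal_mul_eq
    (hT : U₁ * diagonal d₁ * V₁ᵀ = U₂ * diagonal d₂ * V₂ᵀ) :
    V₁ * diagonal d₁ * U₁ᵀ = V₂ * diagonal d₂ * U₂ᵀ := by
  simpa [transpose_mul, Matrix.mul_assoc] using congrArg transpose hT

variable [Fintype ι] [Fintype κ]

theorem transpose_mul_self_mul [Fintype ν] {U : Matrix ι μ R} (hU : Uᵀ * U = 1)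
    (Q : Matrix μ ν R) : (U * Q)ᵀ * (U * Q) = Qᵀ * Q := by
  rw [transpose_mul, Matrix.mul_assoc, ← Matrix.mul_assoc Uᵀ, hU, Matrix.one_mul]

theorem diagonal_mul_eq_of_mul_diagonal_mul_eq (hU₁ : U₁ᵀ * U₁ = 1) (hV₂ : V₂ᵀ * V₂ = 1)
    (hT : U₁ * diagonal d₁ * V₁ᵀ = U₂ * diagonal d₂ * V₂ᵀ) :
    diagonal d₁ * (V₁ᵀ * V₂) = U₁ᵀ * U₂ * diagonal d₂ := by
  simpa [Matrix.mul_assoc, hV₂, ← Matrix.mul_assoc U₁ᵀ U₁, hU₁] using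
    congrArg (U₁ᵀ * · * V₂) hT

theorem eq_mul_transpose_mul_of_mul_diagonal_mul_eq (hU₁ : U₁ᵀ * U₁ = 1) (hV₂ : V₂ᵀ * V₂ = 1)
    (hd₂ : IsUnit d₂) (hT : U₁ * diagonal d₁ * V₁ᵀ = U₂ * diagonal d₂ * V₂ᵀ) :
    U₂ = U₁ * (U₁ᵀ * U₂) := by
  refine mul_right_cancel_of_isUnit (isUnit_diagonal.mpr hd₂) ?_
  calc U₂ * diagonal d₂ = U₁ * (diagonal d₁ * (V₁ᵀ * V₂)) := by
        simpa [Matrix.mul_assoc, hV₂] using (congrArg (· * V₂) hT).symm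
    _ = U₁ * (U₁ᵀ * U₂) * diagonal d₂ := by
        rw [diagonal_mul_eq_of_mul_diagonal_mul_eq hU₁ hV₂ hT]
        simp only [Matrix.mul_assoc]

theorem transpose_mul_self_eq_one_of_mul_diagonal_mul_eq (hU₁ : U₁ᵀ * U₁ = 1)
    (hU₂ : U₂ᵀ * U₂ = 1) (hV₂ : V₂ᵀ * V₂ = 1) (hd₂ : IsUnit d₂)
    (hT : U₁ * diagonal d₁ * V₁ᵀ = U₂ * diagonal d₂ * V₂ᵀ) :
    (U₁ᵀ * U₂)ᵀ * (U₁ᵀ * U₂) = 1 := by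
  rw [← transpose_mul_self_mul hU₁, ← eq_mul_transpose_mul_of_mul_diagonal_mul_eq hU₁ hV₂ hd₂ hT,
    hU₂]

end LowRank

end Matrix

theorem covariate_decomposition_unique {ι κ μ ν R : Type*} [Fintype ι] [Fintype κ]
    [Fintype μ] [Fintype ν] [DecidableEq μ] [DecidableEq ν] [CommRing R]
    {X : Matrix ι μ R} {Z : Matrix κ ν R} (hX : IsUnit (Xᵀ * X)) (hZ : IsUnit (Zᵀ * Z))
    {A₁ A₂ : Matrix κ μ R} {B₁ B₂ : Matrix ι ν R} {C₁ C₂ : Matrix μ ν R} {R₁ R₂ : Matrix ι κ R}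
    (hA₁ : Zᵀ * A₁ = 0) (hA₂ : Zᵀ * A₂ = 0) (hB₁ : Xᵀ * B₁ = 0) (hB₂ : Xᵀ * B₂ = 0)
    (hR₁X : Xᵀ * R₁ = 0) (hR₂X : Xᵀ * R₂ = 0) (hR₁Z : R₁ * Z = 0) (hR₂Z : R₂ * Z = 0)
    (h : X * A₁ᵀ + B₁ * Zᵀ + X * C₁ * Zᵀ + R₁ = X * A₂ᵀ + B₂ * Zᵀ + X * C₂ * Zᵀ + R₂) :
    A₁ = A₂ ∧ B₁ = B₂ ∧ C₁ = C₂ ∧ R₁ = R₂ := by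
  have hA₁Z := transpose_mul_eq_zero_comm.mp hA₁
  have hA₂Z := transpose_mul_eq_zero_comm.mp hA₂
  have hAC : A₁ᵀ + C₁ * Zᵀ = A₂ᵀ + C₂ * Zᵀ := by
    refine mul_left_cancel_of_isUnit hX ?_
    simpa only [Matrix.mul_add, ← Matrix.mul_assoc, hB₁, hB₂, hR₁X, hR₂X, Matrix.zero_mul,
      add_zero] using congrArg (Xᵀ * ·) h
  have hC : C₁ = C₂ := by
    refine mul_right_cancel_of_isUnit hZ ?_
    simpa only [Matrix.add_mul, Matrix.mul_assoc, hA₁Z, hA₂Z, zero_add] using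
      congrArg (· * Z) hAC
  have hA : A₁ = A₂ := by
    rw [hC] at hAC
    exact transpose_injective (add_right_cancel hAC)
  have hB : B₁ = B₂ := by
    refine mul_right_cancel_of_isUnit hZ (add_right_cancel (b := X * C₂ * (Zᵀ * Z)) ?_)
    simpa only [Matrix.add_mul, Matrix.mul_assoc, hA₁Z, hA₂Z, hR₁Z, hR₂Z, Matrix.mul_zero,
      zero_add, add_zero, hC] using congrArg (· * Z) h
  subst hA hB hC
  exact ⟨rfl, rfl, rfl, add_left_cancel h⟩

section ThinSVD

variable {𝕜 ι κ μ : Type*} [Field 𝕜] [LinearOrder 𝕜] [IsStrictOrderedRing 𝕜]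
  [Fintype ι] [Fintype κ] [Fintype μ] [LinearOrder μ]
  {U₁ U₂ : Matrix ι μ 𝕜} {V₁ V₂ : Matrix κ μ 𝕜} {d₁ d₂ : μ → 𝕜}

theorem singularValue_eq_of_transpose_mul_apply_ne_zero (hU₁ : U₁ᵀ * U₁ = 1)
    (hU₂ : U₂ᵀ * U₂ = 1) (hV₁ : V₁ᵀ * V₁ = 1) (hV₂ : V₂ᵀ * V₂ = 1)
    (hd₁_pos : ∀ m, 0 < d₁ m) (hd₂_pos : ∀ m, 0 < d₂ m)
    (hT : U₁ * diagonal d₁ * V₁ᵀ = U₂ * diagonal d₂ * V₂ᵀ) {i j : μ}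
    (hP : (U₁ᵀ * U₂) i j ≠ 0) : d₁ i = d₂ j := by
  have hN := congrFun (congrFun (diagonal_mul_eq_of_mul_diagonal_mul_eq hU₁ hV₂ hT) i) j
  have hP' := congrFun (congrFun (diagonal_mul_eq_of_mul_diagonal_mul_eq hV₁ hU₂
    (transpose_of_mul_diagonal_mul_eq hT)) i) j
  simp only [diagonal_mul, mul_diagonal] at hN hP'
  have hsq : (U₁ᵀ * U₂) i j * (d₁ i ^ 2 - d₂ j ^ 2) = 0 := by
    linear_combination d₁ i * hP' + d₂ j * hN
  exact (pow_left_inj₀ (hd₁_pos i).le (hd₂_pos j).le two_ne_zero).mp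
    (sub_eq_zero.mp ((mul_eq_zero.mp hsq).resolve_left hP))

theorem singularValues_eq_of_mul_diagonal_mul_eq (hU₁ : U₁ᵀ * U₁ = 1) (hU₂ : U₂ᵀ * U₂ = 1)
    (hV₁ : V₁ᵀ * V₁ = 1) (hV₂ : V₂ᵀ * V₂ = 1) (hd₁ : StrictAnti d₁) (hd₂ : StrictAnti d₂)
    (hd₁_pos : ∀ m, 0 < d₁ m) (hd₂_pos : ∀ m, 0 < d₂ m)
    (hT : U₁ * diagonal d₁ * V₁ᵀ = U₂ * diagonal d₂ * V₂ᵀ) : d₁ = d₂ := by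
  have hPP := transpose_mul_self_eq_one_of_mul_diagonal_mul_eq hU₁ hU₂ hV₂
    (Pi.isUnit_of_forall_pos hd₂_pos) hT
  refine hd₁.eq_of_range_subset hd₂ ?_
  rintro _ ⟨j, rfl⟩
  obtain ⟨i, hi⟩ := exists_ne_zero_of_transpose_mul_self_eq_one hPP j
  exact ⟨i, singularValue_eq_of_transpose_mul_apply_ne_zero hU₁ hU₂ hV₁ hV₂ hd₁_pos hd₂_pos hT hi⟩

theorem thin_svd_unique [LinearOrder ι] (hU₁ : U₁ᵀ * U₁ = 1) (hU₂ : U₂ᵀ * U₂ = 1)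
    (hV₁ : V₁ᵀ * V₁ = 1) (hV₂ : V₂ᵀ * V₂ = 1) (hd₁ : StrictAnti d₁) (hd₂ : StrictAnti d₂)
    (hd₁_pos : ∀ m, 0 < d₁ m) (hd₂_pos : ∀ m, 0 < d₂ m)
    (hU₁_sign : ∀ m i, (U₁ i m ≠ 0 ∧ ∀ i', i' < i → U₁ i' m = 0) → 0 < U₁ i m)
    (hU₂_sign : ∀ m i, (U₂ i m ≠ 0 ∧ ∀ i', i' < i → U₂ i' m = 0) → 0 < U₂ i m)
    (hT : U₁ * diagonal d₁ * V₁ᵀ = U₂ * diagonal d₂ * V₂ᵀ) :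
    d₁ = d₂ ∧ U₁ = U₂ ∧ V₁ = V₂ := by
  obtain rfl :=
    singularValues_eq_of_mul_diagonal_mul_eq hU₁ hU₂ hV₁ hV₂ hd₁ hd₂ hd₁_pos hd₂_pos hT
  have hunit := Pi.isUnit_of_forall_pos hd₁_pos
  have hPdiag : (U₁ᵀ * U₂).IsDiag := fun i j hij => by_contra fun hP => hij <| hd₁.injective <|
    singularValue_eq_of_transpose_mul_apply_ne_zero hU₁ hU₂ hV₁ hV₂ hd₁_pos hd₁_pos hT hP
  obtain ⟨p, hp⟩ : ∃ p, U₁ᵀ * U₂ = diagonal p := ⟨_, hPdiag.diagonal_diag.symm⟩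
  have hU : U₂ = U₁ * diagonal p :=
    hp ▸ eq_mul_transpose_mul_of_mul_diagonal_mul_eq hU₁ hV₂ hunit hT
  have hp_sq : ∀ m, p m * p m = 1 := by
    have hPP := transpose_mul_self_eq_one_of_mul_diagonal_mul_eq hU₁ hU₂ hV₂ hunit hT
    rw [hp, diagonal_transpose, diagonal_mul_diagonal, ← diagonal_one] at hPP
    exact fun m => congrFun (diagonal_injective hPP) m
  have hU_col : ∀ i m, U₂ i m = U₁ i m * p m := fun i m => by rw [hU, mul_diagonal]
  have hp_one : p = 1 := funext fun m => by
    have hpos : 0 < p m := pos_of_leading_entry_pos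
      (exists_ne_zero_of_transpose_mul_self_eq_one hU₁ m) (left_ne_zero_of_mul_eq_one (hp_sq m))
      (hU₁_sign m) (fun i => by simpa only [hU_col] using hU₂_sign m i)
    rw [Pi.one_apply]
    nlinarith [hp_sq m]
  rw [hp_one, diagonal_one'] at hp hU
  have hN : V₁ᵀ * V₂ = 1 := mul_left_cancel_of_isUnit (isUnit_diagonal.mpr hunit) <| by
    rw [diagonal_mul_eq_of_mul_diagonal_mul_eq hU₁ hV₂ hT, hp, Matrix.one_mul, Matrix.mul_one]
  refine ⟨rfl, by rw [hU, Matrix.mul_one], ?_⟩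
  rw [eq_mul_transpose_mul_of_mul_diagonal_mul_eq hV₁ hU₂ hunit
    (transpose_of_mul_diagonal_mul_eq hT), hN, Matrix.mul_one]

end ThinSVD

theorem gbm_identifiability_general {I J K L M : ℕ}
    (X : Matrix (Fin I) (Fin K) ℝ) (Z : Matrix (Fin J) (Fin L) ℝ)
    (A₁ A₂ : Matrix (Fin J) (Fin K) ℝ) (B₁ B₂ : Matrix (Fin I) (Fin L) ℝ)
    (C₁ C₂ : Matrix (Fin K) (Fin L) ℝ) (D₁ D₂ : Matrix (Fin M) (Fin M) ℝ)
    (U₁ U₂ : Matrix (Fin I) (Fin M) ℝ) (V₁ V₂ : Matrix (Fin J) (Fin M) ℝ)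
    (h₁ : Cond1 X Z A₁ B₁ D₁ U₁ V₁) (h₂ : Cond1 X Z A₂ B₂ D₂ U₂ V₂)
    (heq : X * A₁ᵀ + B₁ * Zᵀ + X * C₁ * Zᵀ + U₁ * D₁ * V₁ᵀ
         = X * A₂ᵀ + B₂ * Zᵀ + X * C₂ * Zᵀ + U₂ * D₂ * V₂ᵀ) :
    A₁ = A₂ ∧ B₁ = B₂ ∧ C₁ = C₂ ∧ D₁ = D₂ ∧ U₁ = U₂ ∧ V₁ = V₂ := by
  obtain ⟨hX, hZ, hXB₁, hZA₁, hXU₁, hZV₁, hU₁, hV₁, hD₁, hD₁_anti, hD₁_pos, hU₁_sign⟩ := h₁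
  obtain ⟨-, -, hXB₂, hZA₂, hXU₂, hZV₂, hU₂, hV₂, hD₂, hD₂_anti, hD₂_pos, hU₂_sign⟩ := h₂
  obtain ⟨hA, hB, hC, hT⟩ := covariate_decomposition_unique hX hZ hZA₁ hZA₂ hXB₁ hXB₂
    (by simp [← Matrix.mul_assoc, hXU₁]) (by simp [← Matrix.mul_assoc, hXU₂])
    (by rw [Matrix.mul_assoc, transpose_mul_eq_zero_comm.mp hZV₁, Matrix.mul_zero])
    (by rw [Matrix.mul_assoc, transpose_mul_eq_zero_comm.mp hZV₂, Matrix.mul_zero])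
    heq
  rw [← hD₁.diagonal_diag, ← hD₂.diagonal_diag] at hT ⊢
  obtain ⟨hd, hU, hV⟩ := thin_svd_unique hU₁ hU₂ hV₁ hV₂ hD₁_anti hD₂_anti hD₁_pos hD₂_pos
    hU₁_sign hU₂_sign hT
  exact ⟨hA, hB, hC, congrArg diagonal hd, hU, hV⟩

/-- Theorem 1: identifiability of the GBM components. -/
theorem gbm_identifiability {I J K L M : ℕ}
    (hI : 0 < I) (hJ : 0 < J) (hK : 0 < K) (hL : 0 < L) (hM : 0 < M)
    (hMmin : M < min I J)
    (X : Matrix (Fin I) (Fin K) ℝ) (Z : Matrix (Fin J) (Fin L) ℝ)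
    (A₁ A₂ : Matrix (Fin J) (Fin K) ℝ) (B₁ B₂ : Matrix (Fin I) (Fin L) ℝ)
    (C₁ C₂ : Matrix (Fin K) (Fin L) ℝ) (D₁ D₂ : Matrix (Fin M) (Fin M) ℝ)
    (U₁ U₂ : Matrix (Fin I) (Fin M) ℝ) (V₁ V₂ : Matrix (Fin J) (Fin M) ℝ)
    (h₁ : Cond1 X Z A₁ B₁ D₁ U₁ V₁) (h₂ : Cond1 X Z A₂ B₂ D₂ U₂ V₂)
    (heq : X * A₁ᵀ + B₁ * Zᵀ + X * C₁ * Zᵀ + U₁ * D₁ * V₁ᵀ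
         = X * A₂ᵀ + B₂ * Zᵀ + X * C₂ * Zᵀ + U₂ * D₂ * V₂ᵀ) :
    A₁ = A₂ ∧ B₁ = B₂ ∧ C₁ = C₂ ∧ D₁ = D₂ ∧ U₁ = U₂ ∧ V₁ = V₂ :=
  gbm_identifiability_general X Z A₁ A₂ B₁ B₂ C₁ C₂ D₁ D₂ U₁ U₂ V₁ V₂ h₁ h₂ heq
end

section
/- Intermediate identifiability claim (from the proof of Theorem 1). Suppose (A₁,B₁,C₁,D₁,U₁,V₁) and (A₂,B₂,C₂,D₂,U₂,V₂) are two GBM parameter tuples such that XᵀX and ZᵀZ are invertible and Xᵀ Bᵢ = 0, Zᵀ Aᵢ = 0, Xᵀ Uᵢ = 0, Zᵀ Vᵢ = 0 for i = 1, 2. If X A₁ᵀ + B₁ Zᵀ + X C₁ Zᵀ + U₁ D₁ V₁ᵀ = X A₂ᵀ + B₂ Zᵀ + X C₂ Zᵀ + U₂ D₂ V₂ᵀ, then A₁ = A₂, B₁ = B₂, C₁ = C₂, and U₁ D₁ V₁ᵀ = U₂ D₂ V₂ᵀ. -/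
open Matrix


private lemma mat_cancel_left {n m : ℕ} {a : Matrix (Fin n) (Fin n) ℝ} (h : IsUnit a)
    {P Q : Matrix (Fin n) (Fin m) ℝ} (h2 : a * P = a * Q) : P = Q := by
  have h3 := congrArg (fun W => (↑h.unit⁻¹ : Matrix (Fin n) (Fin n) ℝ) * W) h2
  simpa [← Matrix.mul_assoc, Matrix.nonsing_inv_mul a ((Matrix.isUnit_iff_isUnit_det a).mp h)] using h3

private lemma mat_cancel_right {n m : ℕ} {a : Matrix (Fin n) (Fin n) ℝ} (h : IsUnit a)
    {P Q : Matrix (Fin m) (Fin n) ℝ} (h2 : P * a = Q * a) : P = Q := by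
  have h3 := congrArg (fun W => W * (↑h.unit⁻¹ : Matrix (Fin n) (Fin n) ℝ)) h2
  simpa [Matrix.mul_assoc, Matrix.mul_nonsing_inv a ((Matrix.isUnit_iff_isUnit_det a).mp h)] using h3

/-- Intermediate identifiability claim from the proof of Theorem 1. -/
theorem gbm_identifiability_intermediate {I J K L M : ℕ}
    (hI : 0 < I) (hJ : 0 < J) (hK : 0 < K) (hL : 0 < L) (hM : 0 < M)
    (X : Matrix (Fin I) (Fin K) ℝ) (Z : Matrix (Fin J) (Fin L) ℝ)
    (A₁ A₂ : Matrix (Fin J) (Fin K) ℝ) (B₁ B₂ : Matrix (Fin I) (Fin L) ℝ)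
    (C₁ C₂ : Matrix (Fin K) (Fin L) ℝ) (D₁ D₂ : Matrix (Fin M) (Fin M) ℝ)
    (U₁ U₂ : Matrix (Fin I) (Fin M) ℝ) (V₁ V₂ : Matrix (Fin J) (Fin M) ℝ)
    (hXX : IsUnit (Xᵀ * X)) (hZZ : IsUnit (Zᵀ * Z))
    (hB₁ : Xᵀ * B₁ = 0) (hA₁ : Zᵀ * A₁ = 0) (hU₁ : Xᵀ * U₁ = 0) (hV₁ : Zᵀ * V₁ = 0)
    (hB₂ : Xᵀ * B₂ = 0) (hA₂ : Zᵀ * A₂ = 0) (hU₂ : Xᵀ * U₂ = 0) (hV₂ : Zᵀ * V₂ = 0)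
    (heq : X * A₁ᵀ + B₁ * Zᵀ + X * C₁ * Zᵀ + U₁ * D₁ * V₁ᵀ
         = X * A₂ᵀ + B₂ * Zᵀ + X * C₂ * Zᵀ + U₂ * D₂ * V₂ᵀ) :
    A₁ = A₂ ∧ B₁ = B₂ ∧ C₁ = C₂ ∧ U₁ * D₁ * V₁ᵀ = U₂ * D₂ * V₂ᵀ := by
  have hA₁' : A₁ᵀ * Z = 0 := by
    have := congrArg Matrix.transpose hA₁
    simpa [Matrix.transpose_mul] using this
  have hA₂' : A₂ᵀ * Z = 0 := by
    have := congrArg Matrix.transpose hA₂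
    simpa [Matrix.transpose_mul] using this
  have hV₁' : V₁ᵀ * Z = 0 := by
    have := congrArg Matrix.transpose hV₁
    simpa [Matrix.transpose_mul] using this
  have hV₂' : V₂ᵀ * Z = 0 := by
    have := congrArg Matrix.transpose hV₂
    simpa [Matrix.transpose_mul] using this
  -- C₁ = C₂
  have hC : C₁ = C₂ := by
    have h1 := congrArg (fun W => Xᵀ * W * Z) heq
    simp only [Matrix.add_mul, Matrix.mul_add, Matrix.mul_assoc, hA₁', hA₂', hV₁', hV₂',
      Matrix.mul_zero, add_zero, zero_add] at h1
    simp only [← Matrix.mul_assoc, hB₁, hB₂, hU₁, hU₂, Matrix.zero_mul, add_zero, zero_add] at h1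
    have h2 : Xᵀ * X * (C₁ * (Zᵀ * Z)) = Xᵀ * X * (C₂ * (Zᵀ * Z)) := by
      simpa [Matrix.mul_assoc] using h1
    have h4 := mat_cancel_left hXX h2
    exact mat_cancel_right hZZ h4
  subst hC
  -- A₁ = A₂
  have hA : A₁ = A₂ := by
    have h1 := congrArg (fun W => Xᵀ * W) heq
    simp only [Matrix.mul_add] at h1
    simp only [← Matrix.mul_assoc, hB₁, hB₂, hU₁, hU₂, Matrix.zero_mul, add_zero, zero_add] at h1
    have h2 : Xᵀ * X * A₁ᵀ = Xᵀ * X * A₂ᵀ := by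
      have := add_right_cancel h1
      simpa [Matrix.mul_assoc] using this
    have h3 := mat_cancel_left hXX h2
    have := congrArg Matrix.transpose h3
    simpa using this
  subst hA
  -- B₁ = B₂
  have hB : B₁ = B₂ := by
    have h1 := congrArg (fun W => W * Z) heq
    simp only [Matrix.add_mul, Matrix.mul_assoc, hA₁', hV₁', hV₂',
      Matrix.mul_zero, add_zero, zero_add] at h1
    have h2 : B₁ * (Zᵀ * Z) = B₂ * (Zᵀ * Z) := add_right_cancel h1
    exact mat_cancel_right hZZ h2
  subst hB
  refine ⟨rfl, rfl, rfl, ?_⟩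
  have := add_left_cancel heq
  exact this
end

section
/- Theorem 2(d). Suppose the GBM parameter tuple (A,B,C,D,U,V) satisfies Condition 1(b) (XᵀB = 0, ZᵀA = 0, XᵀU = 0, ZᵀV = 0) and the covariates satisfy Condition 2. Let η := X Aᵀ + B Zᵀ + X C Zᵀ + U D Vᵀ. Then for every i ∈ {1,…,I}: (1/J) ∑_{j=1}^J η_{ij} = c_{11} + b_{i1} + ∑_{k=2}^K c_{k1} x_{ik}. -/
open Matrix

/-- Theorem 2(d): the row means of the linear predictor. -/
theorem gbm_interpretation_d {I J K L M : ℕ}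
    (hI : 0 < I) (hJ : 0 < J)
    (X : Matrix (Fin I) (Fin (K + 1)) ℝ) (Z : Matrix (Fin J) (Fin (L + 1)) ℝ)
    (A : Matrix (Fin J) (Fin (K + 1)) ℝ) (B : Matrix (Fin I) (Fin (L + 1)) ℝ)
    (C : Matrix (Fin (K + 1)) (Fin (L + 1)) ℝ) (D : Matrix (Fin M) (Fin M) ℝ)
    (U : Matrix (Fin I) (Fin M) ℝ) (V : Matrix (Fin J) (Fin M) ℝ)
    (hB : Xᵀ * B = 0) (hA : Zᵀ * A = 0) (hU : Xᵀ * U = 0) (hV : Zᵀ * V = 0)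
    (hX1 : ∀ i, X i 0 = 1) (hZ1 : ∀ j, Z j 0 = 1)
    (hXc : ∀ k : Fin (K + 1), k ≠ 0 → ∑ i, X i k = 0)
    (hZc : ∀ l : Fin (L + 1), l ≠ 0 → ∑ j, Z j l = 0) :
    ∀ i : Fin I,
      (1 / (J : ℝ)) * ∑ j, (X * Aᵀ + B * Zᵀ + X * C * Zᵀ + U * D * Vᵀ) i j
        = C 0 0 + B i 0 + ∑ k ∈ Finset.univ \ {(0 : Fin (K + 1))}, C k 0 * X i k := by
  intro i
  have hJ' : (J : ℝ) ≠ 0 := Nat.cast_ne_zero.mpr hJ.ne'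
  have hAcol : ∀ k, ∑ j, A j k = 0 := by
    intro k
    have := congrFun (congrFun hA 0) k
    simpa [Matrix.mul_apply, Matrix.transpose_apply, hZ1] using this
  have hVcol : ∀ m, ∑ j, V j m = 0 := by
    intro m
    have := congrFun (congrFun hV 0) m
    simpa [Matrix.mul_apply, Matrix.transpose_apply, hZ1] using this
  have hZcol : ∀ l, ∑ j, Z j l = if l = 0 then (J : ℝ) else 0 := by
    intro l
    by_cases h : l = 0
    · simp [h, hZ1]
    · simp [h, hZc l h]
  have h1 : ∑ j, (X * Aᵀ) i j = 0 := by
    simp only [Matrix.mul_apply, Matrix.transpose_apply]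
    rw [Finset.sum_comm]
    simp [← Finset.mul_sum, hAcol]
  have h2 : ∑ j, (B * Zᵀ) i j = B i 0 * J := by
    simp only [Matrix.mul_apply, Matrix.transpose_apply]
    rw [Finset.sum_comm]
    simp [← Finset.mul_sum, hZcol, mul_ite]
  have h3 : ∑ j, (X * C * Zᵀ) i j = (∑ k, X i k * C k 0) * J := by
    simp only [Matrix.mul_apply, Matrix.transpose_apply]
    rw [Finset.sum_comm]
    simp [← Finset.mul_sum, hZcol, mul_ite]
  have h4 : ∑ j, (U * D * Vᵀ) i j = 0 := by
    simp only [Matrix.mul_apply, Matrix.transpose_apply]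
    rw [Finset.sum_comm]
    simp [← Finset.mul_sum, hVcol]
  have hsplit : (∑ k, X i k * C k 0)
      = C 0 0 + ∑ k ∈ Finset.univ \ {(0 : Fin (K + 1))}, C k 0 * X i k := by
    rw [← Finset.sum_compl_add_sum {(0 : Fin (K + 1))} (fun k => X i k * C k 0)]
    simp [Finset.compl_eq_univ_sdiff, hX1, mul_comm, add_comm]
  simp only [Matrix.add_apply, Finset.sum_add_distrib, h1, h2, h3, h4, hsplit]
  field_simp
  ring
end

section
/- Theorem 4, part 1 (likelihood-preserving projection for A). Suppose the GBM parameter tuple (A,B,C,D,U,V) satisfies Condition 1 (in particular ZᵀZ is invertible), and let Ã be any real J×K matrix. Define A₁ := Ã − Z (Z⁺ Ã) and C₁ := C + (Z⁺ Ã)ᵀ. Then η(A₁,B,C₁,D,U,V) = η(Ã,B,C,D,U,V), and Zᵀ A₁ = 0, so that (A₁,B,C₁,D,U,V) satisfies Condition 1. -/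
open Matrix

/-- Theorem 4, part 1: likelihood-preserving projection for `A`. -/
theorem gbm_projection_A {I J K L M : ℕ}
    (X : Matrix (Fin I) (Fin K) ℝ) (Z : Matrix (Fin J) (Fin L) ℝ)
    (A : Matrix (Fin J) (Fin K) ℝ) (B : Matrix (Fin I) (Fin L) ℝ)
    (C : Matrix (Fin K) (Fin L) ℝ) (D : Matrix (Fin M) (Fin M) ℝ)
    (U : Matrix (Fin I) (Fin M) ℝ) (V : Matrix (Fin J) (Fin M) ℝ)
    (hcond : Cond1 X Z A B D U V)
    (Atil : Matrix (Fin J) (Fin K) ℝ)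
    (A₁ : Matrix (Fin J) (Fin K) ℝ) (C₁ : Matrix (Fin K) (Fin L) ℝ)
    (hA₁ : A₁ = Atil - Z * ((Zᵀ * Z)⁻¹ * Zᵀ * Atil))
    (hC₁ : C₁ = C + ((Zᵀ * Z)⁻¹ * Zᵀ * Atil)ᵀ) :
    X * A₁ᵀ + B * Zᵀ + X * C₁ * Zᵀ + U * D * Vᵀ
      = X * Atilᵀ + B * Zᵀ + X * C * Zᵀ + U * D * Vᵀ ∧
    Zᵀ * A₁ = 0 ∧
    Cond1 X Z A₁ B D U V := by
  obtain ⟨h1, h2, h3, h4, h5, h6, h7, h8, h9, h10, h11, h12⟩ := hcond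
  have hdet : IsUnit (Zᵀ * Z).det := (Matrix.isUnit_iff_isUnit_det _).mp h2
  have hinv : (Zᵀ * Z) * (Zᵀ * Z)⁻¹ = 1 := Matrix.mul_nonsing_inv _ hdet
  have hZA₁ : Zᵀ * A₁ = 0 := by
    rw [hA₁, Matrix.mul_sub]
    have : Zᵀ * (Z * ((Zᵀ * Z)⁻¹ * Zᵀ * Atil)) = Zᵀ * Atil := by
      rw [← Matrix.mul_assoc, ← Matrix.mul_assoc, ← Matrix.mul_assoc, hinv,
        Matrix.one_mul]
    rw [this, sub_self]
  refine ⟨?_, hZA₁, h1, h2, h3, hZA₁, h5, h6, h7, h8, h9, h10, h11, h12⟩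
  subst hA₁ hC₁
  simp only [Matrix.transpose_sub, Matrix.transpose_mul, Matrix.mul_sub,
    Matrix.sub_mul, Matrix.mul_add, Matrix.add_mul, Matrix.mul_assoc]
  abel
end

section
/- Theorem 4, part 3, likelihood preservation (projection for G = UD). Suppose XᵀX and ZᵀZ are invertible, and let (A,B,C,D,U,V) be a GBM parameter tuple. Let G̃ be any real I×M matrix, and define G₀ := G̃ − X (X⁺ G̃). Suppose U₁ (I×M), D₁ (M×M), V₁ (J×M) are matrices with U₁ D₁ V₁ᵀ = G₀ Vᵀ. Define A₀ := A + V (X⁺ G̃)ᵀ, A₁ := A₀ − Z (Z⁺ A₀), and C₁ := C + (Z⁺ A₀)ᵀ. Then X A₁ᵀ + B Zᵀ + X C₁ Zᵀ + U₁ D₁ V₁ᵀ = X Aᵀ + B Zᵀ + X C Zᵀ + G̃ Vᵀ, i.e., η(A₁,B,C₁,D₁,U₁,V₁) = η(A,B,C,I_M,G̃,V). -/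
open Matrix

/-- Theorem 4, part 3 (likelihood preservation for the projection of `G = U D`). -/
theorem gbm_projection_G_likelihood {I J K L M : ℕ}
    (X : Matrix (Fin I) (Fin K) ℝ) (Z : Matrix (Fin J) (Fin L) ℝ)
    (hX : IsUnit (Xᵀ * X)) (hZ : IsUnit (Zᵀ * Z))
    (A : Matrix (Fin J) (Fin K) ℝ) (B : Matrix (Fin I) (Fin L) ℝ)
    (C : Matrix (Fin K) (Fin L) ℝ) (D : Matrix (Fin M) (Fin M) ℝ)
    (U : Matrix (Fin I) (Fin M) ℝ) (V : Matrix (Fin J) (Fin M) ℝ)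
    (Gtil : Matrix (Fin I) (Fin M) ℝ)
    (G₀ : Matrix (Fin I) (Fin M) ℝ)
    (hG₀ : G₀ = Gtil - X * ((Xᵀ * X)⁻¹ * Xᵀ * Gtil))
    (U₁ : Matrix (Fin I) (Fin M) ℝ) (D₁ : Matrix (Fin M) (Fin M) ℝ)
    (V₁ : Matrix (Fin J) (Fin M) ℝ)
    (hSVD : U₁ * D₁ * V₁ᵀ = G₀ * Vᵀ)
    (A₀ A₁ : Matrix (Fin J) (Fin K) ℝ) (C₁ : Matrix (Fin K) (Fin L) ℝ)
    (hA₀ : A₀ = A + V * ((Xᵀ * X)⁻¹ * Xᵀ * Gtil)ᵀ)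
    (hA₁ : A₁ = A₀ - Z * ((Zᵀ * Z)⁻¹ * Zᵀ * A₀))
    (hC₁ : C₁ = C + ((Zᵀ * Z)⁻¹ * Zᵀ * A₀)ᵀ) :
    X * A₁ᵀ + B * Zᵀ + X * C₁ * Zᵀ + U₁ * D₁ * V₁ᵀ
      = X * Aᵀ + B * Zᵀ + X * C * Zᵀ + Gtil * Vᵀ := by
  subst hG₀ hA₀ hA₁ hC₁
  rw [hSVD]
  simp only [Matrix.transpose_add, Matrix.transpose_sub, Matrix.transpose_mul,
    Matrix.transpose_transpose, Matrix.mul_add, Matrix.add_mul, Matrix.mul_sub,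
    Matrix.sub_mul, Matrix.mul_assoc]
  abel
end

section
/- Theorem 4, part 4, likelihood preservation (projection for H = VD). Suppose XᵀX and ZᵀZ are invertible, and let (A,B,C,D,U,V) be a GBM parameter tuple. Let H̃ be any real J×M matrix, and define H₀ := H̃ − Z (Z⁺ H̃). Suppose U₁ (I×M), D₁ (M×M), V₁ (J×M) are matrices with U₁ D₁ V₁ᵀ = U H₀ᵀ. Define B₀ := B + U (Z⁺ H̃)ᵀ, B₁ := B₀ − X (X⁺ B₀), and C₁ := C + X⁺ B₀. Then X Aᵀ + B₁ Zᵀ + X C₁ Zᵀ + U₁ D₁ V₁ᵀ = X Aᵀ + B Zᵀ + X C Zᵀ + U H̃ᵀ, i.e., η(A,B₁,C₁,D₁,U₁,V₁) = η(A,B,C,I_M,U,H̃). -/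
open Matrix

/-- Theorem 4, part 4 (likelihood preservation for the projection of `H = V D`). -/
theorem gbm_projection_H_likelihood {I J K L M : ℕ}
    (X : Matrix (Fin I) (Fin K) ℝ) (Z : Matrix (Fin J) (Fin L) ℝ)
    (hX : IsUnit (Xᵀ * X)) (hZ : IsUnit (Zᵀ * Z))
    (A : Matrix (Fin J) (Fin K) ℝ) (B : Matrix (Fin I) (Fin L) ℝ)
    (C : Matrix (Fin K) (Fin L) ℝ) (D : Matrix (Fin M) (Fin M) ℝ)
    (U : Matrix (Fin I) (Fin M) ℝ) (V : Matrix (Fin J) (Fin M) ℝ)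
    (Htil : Matrix (Fin J) (Fin M) ℝ)
    (H₀ : Matrix (Fin J) (Fin M) ℝ)
    (hH₀ : H₀ = Htil - Z * ((Zᵀ * Z)⁻¹ * Zᵀ * Htil))
    (U₁ : Matrix (Fin I) (Fin M) ℝ) (D₁ : Matrix (Fin M) (Fin M) ℝ)
    (V₁ : Matrix (Fin J) (Fin M) ℝ)
    (hSVD : U₁ * D₁ * V₁ᵀ = U * H₀ᵀ)
    (B₀ B₁ : Matrix (Fin I) (Fin L) ℝ) (C₁ : Matrix (Fin K) (Fin L) ℝ)
    (hB₀ : B₀ = B + U * ((Zᵀ * Z)⁻¹ * Zᵀ * Htil)ᵀ)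
    (hB₁ : B₁ = B₀ - X * ((Xᵀ * X)⁻¹ * Xᵀ * B₀))
    (hC₁ : C₁ = C + (Xᵀ * X)⁻¹ * Xᵀ * B₀) :
    X * Aᵀ + B₁ * Zᵀ + X * C₁ * Zᵀ + U₁ * D₁ * V₁ᵀ
      = X * Aᵀ + B * Zᵀ + X * C * Zᵀ + U * Htilᵀ := by
  subst hH₀ hB₀ hB₁ hC₁
  rw [hSVD]
  simp only [Matrix.transpose_sub, Matrix.transpose_mul, Matrix.transpose_transpose,
    Matrix.sub_mul, Matrix.add_mul, Matrix.mul_sub, Matrix.mul_add, Matrix.mul_assoc]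
  abel
end

section
/- Lemma from the proof of the augmented-Fisher Proposition. Let F be a real d×d matrix and J a real k×d matrix, and set A := F + JᵀJ and C := J F⁻¹ Jᵀ. If F, C, and I_k + C are invertible, then (J A⁻¹ Jᵀ)⁻¹ J A⁻¹ = C⁻¹ J F⁻¹. -/
open Matrix

/-- Lemma from the proof of the augmented-Fisher Proposition:
`(J A⁻¹ Jᵀ)⁻¹ J A⁻¹ = C⁻¹ J F⁻¹` where `A = F + JᵀJ` and `C = J F⁻¹ Jᵀ`. -/
theorem augmented_fisher_lemma_projection {d k : ℕ}
    (hd : 0 < d) (hk : 0 < k)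
    (F : Matrix (Fin d) (Fin d) ℝ) (J : Matrix (Fin k) (Fin d) ℝ)
    (hF : IsUnit F) (hC : IsUnit (J * F⁻¹ * Jᵀ))
    (hIC : IsUnit ((1 : Matrix (Fin k) (Fin k) ℝ) + J * F⁻¹ * Jᵀ)) :
    (J * (F + Jᵀ * J)⁻¹ * Jᵀ)⁻¹ * (J * (F + Jᵀ * J)⁻¹)
      = (J * F⁻¹ * Jᵀ)⁻¹ * (J * F⁻¹) := by
  set C := J * F⁻¹ * Jᵀ with hCdef
  set S := ((1 : Matrix (Fin k) (Fin k) ℝ) + C)⁻¹ with hSdef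
  have hICd : IsUnit ((1 : Matrix (Fin k) (Fin k) ℝ) + C).det :=
    (Matrix.isUnit_iff_isUnit_det _).mp hIC
  have hwood : (F + Jᵀ * J)⁻¹ = F⁻¹ - F⁻¹ * Jᵀ * S * J * F⁻¹ := by
    have h := Matrix.add_mul_mul_inv_eq_sub F Jᵀ 1 J hF isUnit_one
      (by rw [inv_one]; exact hIC)
    simp only [Matrix.mul_one, inv_one] at h
    rw [h, hSdef]
  have hSinv : ((1 : Matrix (Fin k) (Fin k) ℝ) + C) * S = 1 :=
    mul_nonsing_inv _ hICd
  have hCS : (1 : Matrix (Fin k) (Fin k) ℝ) - C * S = S := by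
    have : S + C * S = 1 := by rw [← hSinv, Matrix.add_mul, Matrix.one_mul]
    rw [← this]; abel
  have hJA : J * (F + Jᵀ * J)⁻¹ = S * (J * F⁻¹) := by
    rw [hwood]
    have h2 : J * (F⁻¹ - F⁻¹ * Jᵀ * S * J * F⁻¹)
        = (1 - C * S) * (J * F⁻¹) := by
      rw [hCdef]
      simp only [Matrix.mul_sub, Matrix.sub_mul, Matrix.one_mul, Matrix.mul_assoc]
    rw [h2, hCS]
  have hJAJ : J * (F + Jᵀ * J)⁻¹ * Jᵀ = S * C := by
    rw [hJA, Matrix.mul_assoc, hCdef, Matrix.mul_assoc]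
  rw [hJAJ, hJA, Matrix.mul_inv_rev, nonsing_inv_nonsing_inv _ hICd,
    Matrix.mul_assoc C⁻¹, ← Matrix.mul_assoc (1 + C), hSinv, Matrix.one_mul]
end

section
/- Key identity from the proof of the augmented-Fisher Proposition. Let F be a real d×d matrix and J a real k×d matrix, and set A := F + JᵀJ and C := J F⁻¹ Jᵀ. If F, C, and I_k + C are invertible, then A⁻¹ − A⁻¹ Jᵀ (J A⁻¹ Jᵀ)⁻¹ J A⁻¹ = F⁻¹ − F⁻¹ Jᵀ (J F⁻¹ Jᵀ)⁻¹ J F⁻¹. -/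
open Matrix

/-- Key identity from the proof of the augmented-Fisher Proposition:
`A⁻¹ − A⁻¹ Jᵀ (J A⁻¹ Jᵀ)⁻¹ J A⁻¹ = F⁻¹ − F⁻¹ Jᵀ (J F⁻¹ Jᵀ)⁻¹ J F⁻¹`
where `A = F + JᵀJ`. -/
theorem augmented_fisher_key_identity {d k : ℕ}
    (hd : 0 < d) (hk : 0 < k)
    (F : Matrix (Fin d) (Fin d) ℝ) (J : Matrix (Fin k) (Fin d) ℝ)
    (hF : IsUnit F) (hC : IsUnit (J * F⁻¹ * Jᵀ))
    (hIC : IsUnit ((1 : Matrix (Fin k) (Fin k) ℝ) + J * F⁻¹ * Jᵀ)) :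
    (F + Jᵀ * J)⁻¹
        - (F + Jᵀ * J)⁻¹ * Jᵀ * (J * (F + Jᵀ * J)⁻¹ * Jᵀ)⁻¹ * J * (F + Jᵀ * J)⁻¹
      = F⁻¹ - F⁻¹ * Jᵀ * (J * F⁻¹ * Jᵀ)⁻¹ * J * F⁻¹ := by
  set C : Matrix (Fin k) (Fin k) ℝ := J * F⁻¹ * Jᵀ with hCdef
  set W : Matrix (Fin k) (Fin k) ℝ := (1 + C)⁻¹ with hWdef
  have hFd : IsUnit F.det := (isUnit_iff_isUnit_det F).mp hF
  have hCd : IsUnit C.det := (isUnit_iff_isUnit_det C).mp hC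
  have hICd : IsUnit (1 + C).det := (isUnit_iff_isUnit_det _).mp hIC
  have hF1 : F * F⁻¹ = 1 := mul_nonsing_inv F hFd
  have hC1 : C * C⁻¹ = 1 := mul_nonsing_inv C hCd
  have hC2 : C⁻¹ * C = 1 := nonsing_inv_mul C hCd
  have hW1 : (1 + C) * W = 1 := mul_nonsing_inv _ hICd
  have hW2 : W * (1 + C) = 1 := nonsing_inv_mul _ hICd
  clear_value W C
  -- k×k ring facts
  have hWC : W + C * W = 1 := by linear_combination (norm := noncomm_ring) hW1
  have hcomm : C * W = W * C := by
    calc C * W = (W * (1 + C)) * C * W := by rw [hW2, one_mul]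
    _ = W * C * ((1 + C) * W) := by noncomm_ring
    _ = W * C := by rw [hW1, mul_one]
  have hCWinv : (C * W)⁻¹ = (1 + C) * C⁻¹ := by
    apply inv_eq_right_inv
    calc C * W * ((1 + C) * C⁻¹) = C * (W * (1 + C)) * C⁻¹ := by noncomm_ring
    _ = C * C⁻¹ := by rw [hW2, mul_one]
    _ = 1 := hC1
  have hfin : W + C⁻¹ * W = C⁻¹ := by
    calc W + C⁻¹ * W = (C⁻¹ * (1 + C)) * W := by noncomm_ring [hC2]
    _ = C⁻¹ := by rw [mul_assoc, hW1, mul_one]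
  -- shape-mixing helpers
  have f1X : ∀ (n : ℕ) (X : Matrix (Fin d) (Fin n) ℝ), F * (F⁻¹ * X) = X := by
    intro n X; rw [← Matrix.mul_assoc, hF1, Matrix.one_mul]
  have sand : ∀ (n : ℕ) (Q : Matrix (Fin k) (Fin n) ℝ),
      J * (F⁻¹ * (Jᵀ * Q)) = C * Q := by
    intro n Q; rw [hCdef]; simp only [Matrix.mul_assoc]
  -- Woodbury
  have hC' : J * (F⁻¹ * Jᵀ) = C := by rw [hCdef, Matrix.mul_assoc]
  have h1 : (1 : Matrix (Fin k) (Fin k) ℝ) - C * W = W := by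
    rw [sub_eq_iff_eq_add]; exact hWC.symm
  have hAB : (F + Jᵀ * J) * (F⁻¹ - F⁻¹ * Jᵀ * W * J * F⁻¹) = 1 := by
    simp only [Matrix.add_mul, Matrix.mul_sub, Matrix.mul_assoc, f1X, hF1, sand]
    have key : W * (J * F⁻¹) + C * (W * (J * F⁻¹)) = J * F⁻¹ := by
      calc W * (J * F⁻¹) + C * (W * (J * F⁻¹)) = (W + C * W) * (J * F⁻¹) := by
            rw [Matrix.add_mul, Matrix.mul_assoc]
      _ = J * F⁻¹ := by rw [hWC, Matrix.one_mul]
    rw [← Matrix.mul_add, key, add_sub_cancel_right]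
  have hA : IsUnit (F + Jᵀ * J) := by
    have heq : F + Jᵀ * J = F * (1 + (F⁻¹ * Jᵀ) * J) := by
      rw [Matrix.mul_add, Matrix.mul_one, ← Matrix.mul_assoc, ← Matrix.mul_assoc, hF1,
        Matrix.one_mul]
    rw [isUnit_iff_isUnit_det, heq, det_mul, det_one_add_mul_comm]
    have : J * (F⁻¹ * Jᵀ) = C := by rw [hCdef, Matrix.mul_assoc]
    rw [this]
    exact hFd.mul hICd
  have hAinv : (F + Jᵀ * J)⁻¹ = F⁻¹ - F⁻¹ * Jᵀ * W * J * F⁻¹ := inv_eq_right_inv hAB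
  have hJAJ : J * (F + Jᵀ * J)⁻¹ * Jᵀ = C * W := by
    rw [hAinv]
    simp only [Matrix.mul_sub, Matrix.sub_mul, Matrix.mul_assoc, sand]
    rw [hC']
    have h1' : (1 : Matrix (Fin k) (Fin k) ℝ) - W * C = W := by rw [← hcomm]; exact h1
    calc C - C * (W * C) = C * (1 - W * C) := by noncomm_ring
    _ = C * W := by rw [h1']
  have hAJt : (F + Jᵀ * J)⁻¹ * Jᵀ = F⁻¹ * (Jᵀ * W) := by
    rw [hAinv]
    simp only [Matrix.sub_mul, Matrix.mul_assoc]
    rw [hC', ← hcomm, show F⁻¹ * Jᵀ - F⁻¹ * (Jᵀ * (C * W)) = F⁻¹ * (Jᵀ * (1 - C * W)) by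
      rw [Matrix.mul_sub, Matrix.mul_one, Matrix.mul_sub], h1]
  have hJA : J * (F + Jᵀ * J)⁻¹ = W * (J * F⁻¹) := by
    rw [hAinv]
    simp only [Matrix.mul_sub, Matrix.mul_assoc, sand]
    calc J * F⁻¹ - C * (W * (J * F⁻¹)) = (1 - C * W) * (J * F⁻¹) := by
          rw [Matrix.sub_mul, Matrix.one_mul, Matrix.mul_assoc]
    _ = W * (J * F⁻¹) := by rw [h1]
  have wn : ∀ (n : ℕ) (X : Matrix (Fin k) (Fin n) ℝ), W * ((1 + C) * X) = X := by
    intro n X; rw [← Matrix.mul_assoc, hW2, Matrix.one_mul]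
  have hmid : (F + Jᵀ * J)⁻¹ * Jᵀ * ((1 + C) * C⁻¹) * J * (F + Jᵀ * J)⁻¹
      = F⁻¹ * (Jᵀ * (C⁻¹ * (W * (J * F⁻¹)))) := by
    rw [hAJt]
    simp only [Matrix.mul_assoc]
    rw [hJA]
    simp only [wn]
  rw [hJAJ, hCWinv, hmid, hAinv]
  simp only [Matrix.mul_assoc, sub_sub]
  congr 1
  rw [← Matrix.mul_add, ← Matrix.mul_add]
  congr 2
  calc W * (J * F⁻¹) + C⁻¹ * (W * (J * F⁻¹)) = (W + C⁻¹ * W) * (J * F⁻¹) := by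
        rw [Matrix.add_mul, Matrix.mul_assoc]
  _ = C⁻¹ * (J * F⁻¹) := by rw [hfin]
end

section
/- The negative binomial distribution is an overdispersed Poisson (Poisson–Gamma mixture). For every natural number y and all real μ > 0 and r > 0: ∫₀^∞ (λ^y e^{−λ} / y!) · ((r/μ)^r λ^{r−1} e^{−(r/μ)λ} / Γ(r)) dλ = (Γ(y + r) / (Γ(y + 1) Γ(r))) · (μ/(μ + r))^y · (r/(μ + r))^r, where the left-hand side integrates the Poisson(λ) probability mass at y against the Gamma(r, r/μ) density (shape r, rate r/μ) in λ over (0, ∞). -/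
open Real MeasureTheory

/-- The negative binomial distribution is a Poisson–Gamma mixture: integrating the
Poisson(λ) mass at `y` against the Gamma(r, r/μ) density in `λ` over `(0, ∞)` yields the
negative binomial mass `NegBin(y | μ, r)`. -/
theorem negbin_poisson_gamma_mixture (y : ℕ) (μ r : ℝ) (hμ : 0 < μ) (hr : 0 < r) :
    ∫ l in Set.Ioi (0 : ℝ),
        (l ^ y * Real.exp (-l) / (Nat.factorial y : ℝ)) *
        ((r / μ) ^ r * l ^ (r - 1) * Real.exp (-(r / μ) * l) / Real.Gamma r)
      = (Real.Gamma ((y : ℝ) + r) / (Real.Gamma ((y : ℝ) + 1) * Real.Gamma r)) *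
          (μ / (μ + r)) ^ y * (r / (μ + r)) ^ r := by
  have hb : 0 < 1 + r / μ := by positivity
  have ha : 0 < (y : ℝ) + r := by positivity
  have key : ∫ l in Set.Ioi (0 : ℝ),
        (l ^ y * Real.exp (-l) / (Nat.factorial y : ℝ)) *
        ((r / μ) ^ r * l ^ (r - 1) * Real.exp (-(r / μ) * l) / Real.Gamma r)
      = ((r / μ) ^ r / ((Nat.factorial y : ℝ) * Real.Gamma r)) *
        ∫ l in Set.Ioi (0 : ℝ), l ^ (((y : ℝ) + r) - 1) * Real.exp (-((1 + r / μ) * l)) := by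
    rw [← MeasureTheory.integral_const_mul]
    refine setIntegral_congr_fun measurableSet_Ioi (fun l hl => ?_)
    have hl0 : (0 : ℝ) < l := hl
    have h1 : (l : ℝ) ^ y * l ^ (r - 1) = l ^ (((y : ℝ) + r) - 1) := by
      rw [← Real.rpow_natCast l y, ← Real.rpow_add hl0]
      ring_nf
    have h2 : Real.exp (-l) * Real.exp (-(r / μ) * l) = Real.exp (-((1 + r / μ) * l)) := by
      rw [← Real.exp_add]; ring_nf
    rw [← h1, ← h2]
    ring
  rw [key, integral_rpow_mul_exp_neg_mul_Ioi ha hb]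
  have hμr : 0 < μ + r := by positivity
  have h3 : (1 : ℝ) / (1 + r / μ) = μ / (μ + r) := by
    field_simp
  have h4 : (μ / (μ + r)) ^ ((y : ℝ) + r) =
      (μ / (μ + r)) ^ y * (μ / (μ + r)) ^ r := by
    rw [Real.rpow_add (by positivity), Real.rpow_natCast]
  have h5 : (r / μ) ^ r * (μ / (μ + r)) ^ r = (r / (μ + r)) ^ r := by
    rw [← Real.mul_rpow (by positivity) (by positivity)]
    congr 1
    field_simp
  have h6 : Real.Gamma ((y : ℝ) + 1) = (Nat.factorial y : ℝ) := by
    exact_mod_cast Real.Gamma_nat_eq_factorial y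
  rw [h3, h4, ← h5, h6]
  ring
end
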